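/- Let d ≥ 3 and n ≥ 2 be integers, and let w ∈ G(d,d,n) with w ≤_T γ. Then ℓ_T(w) = n − dim Fix(w), where Fix(w) = {x ∈ ℂ^n : wx = x}. -/

import Mathlib

open Matrix Complex

/-- The primitive `d`-th root of unity `ζ_d = exp(2πi/d)`. -/
noncomputable def zetaC (d : ℕ) : ℂ := Complex.exp (2 * (Real.pi : ℂ) * Complex.I / (d : ℂ))

/-- The ambient group of invertible `n × n` complex matrices. -/
abbrev GLn (n : ℕ) := GL (Fin n) ℂ

/-- Membership in `G(d,d,n)`: monomial matrices whose nonzero entries are `d`-th roots of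
unity with product `1`. -/
def IsGdd (d n : ℕ) (w : GLn n) : Prop :=
  ∃ (σ : Equiv.Perm (Fin n)) (z : Fin n → ℂ),
    (∀ j, z j ^ d = 1) ∧ (∏ j, z j) = 1 ∧
    ∀ k l : Fin n, (w : Matrix (Fin n) (Fin n) ℂ) k l = if k = σ l then z l else 0

/-- The fixed space `{x : ℂⁿ | w x = x}` of `w`. -/
noncomputable def fixSpace {n : ℕ} (w : GLn n) : Submodule ℂ (Fin n → ℂ) :=
  LinearMap.ker ((w : Matrix (Fin n) (Fin n) ℂ).mulVecLin - LinearMap.id)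

/-- A reflection of `G(d,d,n)`: an element of the group of finite order whose fixed space
has dimension `n - 1`. -/
def IsGddRefl (d n : ℕ) (t : GLn n) : Prop :=
  IsGdd d n t ∧ IsOfFinOrder t ∧ Module.finrank ℂ (fixSpace t) = n - 1

/-- The absolute (reflection) length `ℓ_T`. -/
noncomputable def ellT (d n : ℕ) (w : GLn n) : ℕ :=
  sInf {k | ∃ l : List (GLn n), l.length = k ∧ (∀ t ∈ l, IsGddRefl d n t) ∧ l.prod = w}

/-- The absolute order `u ≤_T v`. -/
def absLe (d n : ℕ) (u v : GLn n) : Prop :=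
  ellT d n v = ellT d n u + ellT d n (u⁻¹ * v)

/-- The matrix of the Coxeter element `γ = [1⁰ 2⁰ … (n−1)⁰][n⁰]⁻¹`:
`γ e_i = e_{i+1}` for `1 ≤ i ≤ n−2` (1-based), `γ e_{n−1} = ζ_d e_1`, `γ e_n = ζ_d⁻¹ e_n`. -/
noncomputable def gammaMat (d n : ℕ) : Matrix (Fin n) (Fin n) ℂ :=
  Matrix.of fun k l : Fin n =>
    if (l : ℕ) + 2 < n ∧ (k : ℕ) = (l : ℕ) + 1 then 1
    else if (l : ℕ) + 2 = n ∧ (k : ℕ) = 0 then zetaC d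
    else if (l : ℕ) + 1 = n ∧ k = l then (zetaC d)⁻¹
    else 0

/-- The matrix of the reflection `((i⁰ jˢ))` (1-based indices `i < j`): it sends
`e_i ↦ ζ_dˢ e_j`, `e_j ↦ ζ_d⁻ˢ e_i` and fixes the other basis vectors. -/
noncomputable def reflMat (d n : ℕ) (i j s : ℕ) : Matrix (Fin n) (Fin n) ℂ :=
  Matrix.of fun k l : Fin n =>
    if (l : ℕ) + 1 = i ∧ (k : ℕ) + 1 = j then zetaC d ^ s
    else if (l : ℕ) + 1 = j ∧ (k : ℕ) + 1 = i then (zetaC d ^ s)⁻¹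
    else if k = l ∧ (k : ℕ) + 1 ≠ i ∧ (k : ℕ) + 1 ≠ j then 1
    else 0

/-- Reduced `T`-words for `w`. -/
def IsReducedTWord (d n : ℕ) (w : GLn n) (l : List (GLn n)) : Prop :=
  (∀ t ∈ l, IsGddRefl d n t) ∧ l.prod = w ∧ l.length = ellT d n w

/-- The set `T_γ` of reflections below `γ` in absolute order. -/
def TgammaSet (d n : ℕ) (γ : GLn n) : Set (GLn n) :=
  {t : GLn n | IsGddRefl d n t ∧ absLe d n t γ}

/-- The list of (1-based) triples `(i, j, s)` indexing the reflections `((i⁰ jˢ))` of `T_γ`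
in the order `≺`: first `((i⁰ j⁰))` with `1 ≤ i < j ≤ n−1` lexicographically, then for each
`i = 1, …, n−1` the block `((i⁰ n⁰)), ((i⁰ n^{d−1})), …, ((i⁰ n¹)),
((i⁰ (i+1)^{d−1})), …, ((i⁰ (n−1)^{d−1}))`. -/
def reflTriples (d n : ℕ) : List (ℕ × ℕ × ℕ) :=
  ((List.range' 1 (n - 2)).flatMap fun i =>
    (List.range' (i + 1) (n - 1 - i)).map fun j => (i, j, 0)) ++
  ((List.range' 1 (n - 1)).flatMap fun i =>
    ((i, n, 0) :: ((List.range' 1 (d - 1)).map fun r => (i, n, d - r))) ++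
    ((List.range' (i + 1) (n - 1 - i)).map fun j => (i, j, d - 1)))

/-- `a` occurs (strictly) before `b` in the list `l`. -/
def ListBefore {α : Type*} (l : List α) (a b : α) : Prop :=
  ∃ l1 l2 l3 : List α, l = l1 ++ a :: (l2 ++ b :: l3)

/-- The total order `≺` on `T_γ`. -/
def precRel (d n : ℕ) (t t' : GLn n) : Prop :=
  ∃ p q : ℕ × ℕ × ℕ,
    (t : Matrix (Fin n) (Fin n) ℂ) = reflMat d n p.1 p.2.1 p.2.2 ∧
    (t' : Matrix (Fin n) (Fin n) ℂ) = reflMat d n q.1 q.2.1 q.2.2 ∧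
    ListBefore (reflTriples d n) p q

section ELShellability

variable {P : Type*} {Λ : Type*}

/-- `b` covers `a` with respect to the relation `le`. -/
def CovRel (le : P → P → Prop) (a b : P) : Prop :=
  le a b ∧ a ≠ b ∧ ∀ c, le a c → le c b → c = a ∨ c = b

/-- `c` is a maximal (i.e. saturated) chain of the interval `[x, y]`: a sequence of covers
starting at `x` and ending at `y`. -/
def IsMaxChainIn (le : P → P → Prop) (x y : P) (c : List P) : Prop :=
  c.Chain' (CovRel le) ∧ c.head? = some x ∧ c.getLast? = some y

/-- The label sequence of a chain `c` under the edge labeling `lab`. -/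
def labelSeq (lab : P → P → Λ) (c : List P) : List Λ :=
  (c.zip c.tail).map fun p => lab p.1 p.2

/-- `lab` is an EL-labeling with respect to the order `le` on `P` and the (strict) order
`lt` on the label poset `Λ`: every closed interval has exactly one maximal chain with
strictly increasing label sequence, and this chain is lexicographically strictly smaller
than every other maximal chain of the interval. -/
def IsELLabeling (le : P → P → Prop) (lt : Λ → Λ → Prop) (lab : P → P → Λ) : Prop :=
  ∀ x y : P, le x y →
    ∃ c : List P, IsMaxChainIn le x y c ∧ (labelSeq lab c).Chain' lt ∧
      ∀ c' : List P, IsMaxChainIn le x y c' → c' ≠ c →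
        ¬ (labelSeq lab c').Chain' lt ∧ List.Lex lt (labelSeq lab c) (labelSeq lab c')

/-- EL-shellability: existence of an EL-labeling into some strictly ordered label type. -/
def IsELShellable (le : P → P → Prop) : Prop :=
  ∃ (Λ' : Type) (lt : Λ' → Λ' → Prop), IsStrictOrder Λ' lt ∧
    ∃ lab : P → P → Λ', IsELLabeling le lt lab

end ELShellability

/-- The set of `m`-divisible noncrossing partitions `NC^{(m)}` (as `(m+1)`-tuples). -/
def NCmSet (d n m : ℕ) (γ : GLn n) : Set (Fin (m + 1) → GLn n) :=
  {w | (List.ofFn w).prod = γ ∧ (∑ i, ellT d n (w i)) = ellT d n γ}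

/-- The order on `m`-divisible noncrossing partitions:
`(u₀; u₁, …, u_m) ≤ (v₀; v₁, …, v_m)` iff `v_i ≤_T u_i` for all `1 ≤ i ≤ m`. -/
def NCmLe (d n : ℕ) {m : ℕ} (u v : Fin (m + 1) → GLn n) : Prop :=
  ∀ i : Fin (m + 1), i ≠ 0 → absLe d n (v i) (u i)

section Shifts

variable {G : Type*} [Monoid G]

/-- The left-shift of a word at (1-based) position `i`:
`(t₁, …, t_{i−2}, t_i, t_i t_{i−1} t_i, t_{i+1}, …, t_k)`. -/
def leftShiftAt (l : List G) (i : ℕ) : List G :=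
  l.take (i - 2) ++ [l.getD (i - 1) 1, l.getD (i - 1) 1 * l.getD (i - 2) 1 * l.getD (i - 1) 1]
    ++ l.drop i

/-- The right-shift of a word at (1-based) position `i`:
`(t₁, …, t_{i−1}, t_i t_{i+1} t_i, t_i, t_{i+2}, …, t_k)`. -/
def rightShiftAt (l : List G) (i : ℕ) : List G :=
  l.take (i - 1) ++ [l.getD (i - 1) 1 * l.getD i 1 * l.getD (i - 1) 1, l.getD (i - 1) 1]
    ++ l.drop (i + 1)

/-- One left-shift step between words. -/
def LeftShiftStep (l l' : List G) : Prop :=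
  ∃ i, 2 ≤ i ∧ i ≤ l.length ∧ l' = leftShiftAt l i

/-- The word `l` has a descent at (1-based) position `p` with respect to the strict
relation `lt`, i.e. `t_p ≻ t_{p+1}`. -/
def HasDescentAt (lt : G → G → Prop) (l : List G) (p : ℕ) : Prop :=
  lt (l.getD p 1) (l.getD (p - 1) 1)

end Shifts

/-- A `γ`-compatible reflection ordering (Definition 4.2 of the paper): for all
non-commuting reflections `t₁, t₂ ≤_T γ` and every rank-2 element `x ≤_T γ` above both,
there is exactly one ordered pair `(a, b)` of reflections below `x` with `ab = x` and
`a ≺ b`. -/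
def IsCompatibleOrdering (d n : ℕ) (γ : GLn n) (lt : GLn n → GLn n → Prop) : Prop :=
  ∀ t1 t2 : GLn n, IsGddRefl d n t1 → IsGddRefl d n t2 →
    absLe d n t1 γ → absLe d n t2 γ → t1 * t2 ≠ t2 * t1 →
    ∀ x : GLn n, ellT d n x = 2 → absLe d n x γ → absLe d n t1 x → absLe d n t2 x →
      ∃! p : GLn n × GLn n, IsGddRefl d n p.1 ∧ IsGddRefl d n p.2 ∧
        absLe d n p.1 x ∧ absLe d n p.2 x ∧ p.1 * p.2 = x ∧ lt p.1 p.2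

/-!
A reflection fixes a hyperplane and `Fix u ⊓ Fix v ≤ Fix (u * v)`, so the codimension of the fixed
space is subadditive and `n - dim Fix u ≤ ℓ_T(u)` for every product `u` of reflections. The
Coxeter element `γ` has `Fix γ = 0` and is an explicit product of `n` reflections, so
`ℓ_T(γ) = n`. If `w ≤_T γ`, then `ℓ_T(w) + ℓ_T(w⁻¹γ) = n`, while `Fix w ⊓ Fix (w⁻¹γ) ≤ Fix γ = 0`
makes the two codimensions add up to at least `n`; so both lower bounds are equalities.
-/

section

variable {d n : ℕ}

def monomialMatrix (σ : Equiv.Perm (Fin n)) (z : Fin n → ℂ) : Matrix (Fin n) (Fin n) ℂ :=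
  of fun k l => if k = σ l then z l else 0

lemma monomialMatrix_mul (σ τ : Equiv.Perm (Fin n)) (z w : Fin n → ℂ) :
    monomialMatrix σ z * monomialMatrix τ w =
      monomialMatrix (σ * τ) fun l => z (τ l) * w l := by
  ext k l
  rw [mul_apply, Finset.sum_eq_single (τ l)]
  · by_cases h : k = σ (τ l) <;> simp [monomialMatrix, h]
  · intro m _ hm
    simp [monomialMatrix, hm]
  · simp

lemma monomialMatrix_one : monomialMatrix (1 : Equiv.Perm (Fin n)) 1 = 1 := by
  ext k l
  by_cases h : k = l <;> simp [monomialMatrix, one_apply, h]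

lemma monomialMatrix_mulVec (σ : Equiv.Perm (Fin n)) (z x : Fin n → ℂ) (k : Fin n) :
    (monomialMatrix σ z *ᵥ x) k = z (σ.symm k) * x (σ.symm k) := by
  rw [mulVec, dotProduct, Finset.sum_eq_single (σ.symm k)]
  · simp [monomialMatrix]
  · intro m _ hm
    have : k ≠ σ m := fun h => hm (by simp [h])
    simp [monomialMatrix, this]
  · simp

def monomialUnit (σ : Equiv.Perm (Fin n)) (z : Fin n → ℂˣ) : GLn n where
  val := monomialMatrix σ fun l => z l
  inv := monomialMatrix σ⁻¹ fun l => ↑(z (σ⁻¹ l))⁻¹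
  val_inv := by
    rw [monomialMatrix_mul, mul_inv_cancel, ← monomialMatrix_one]
    congr 1
    ext l
    simp
  inv_val := by
    rw [monomialMatrix_mul, inv_mul_cancel, ← monomialMatrix_one]
    congr 1
    ext l
    simp

lemma monomialUnit_mul (σ τ : Equiv.Perm (Fin n)) (z w : Fin n → ℂˣ) :
    monomialUnit σ z * monomialUnit τ w = monomialUnit (σ * τ) fun l => z (τ l) * w l := by
  ext : 1
  simp [monomialUnit, monomialMatrix_mul]

@[simp]
lemma monomialUnit_one : monomialUnit (1 : Equiv.Perm (Fin n)) 1 = 1 :=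
  Units.ext monomialMatrix_one

lemma mem_fixSpace {w : GLn n} {x : Fin n → ℂ} :
    x ∈ fixSpace w ↔ (w : Matrix (Fin n) (Fin n) ℂ) *ᵥ x = x := by
  simp [fixSpace, sub_eq_zero]

lemma fixSpace_one : fixSpace (1 : GLn n) = ⊤ := by
  rw [fixSpace, Units.val_one, mulVecLin_one, sub_self, LinearMap.ker_zero]

lemma finrank_fixSpace_add_finrank_fixSpace_le (u v : GLn n) :
    Module.finrank ℂ (fixSpace u) + Module.finrank ℂ (fixSpace v) ≤
      n + Module.finrank ℂ (fixSpace (u * v)) := by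
  have hinf : fixSpace u ⊓ fixSpace v ≤ fixSpace (u * v) := fun x hx => by
    rw [Submodule.mem_inf, mem_fixSpace, mem_fixSpace] at hx
    rw [mem_fixSpace, Units.val_mul, ← mulVec_mulVec, hx.2, hx.1]
  rw [← Submodule.finrank_sup_add_finrank_inf_eq]
  gcongr
  · simpa using Submodule.finrank_le (fixSpace u ⊔ fixSpace v)
  · exact Submodule.finrank_mono hinf

lemma mem_fixSpace_monomialUnit {σ : Equiv.Perm (Fin n)} {z : Fin n → ℂˣ} {x : Fin n → ℂ} :
    x ∈ fixSpace (monomialUnit σ z) ↔ ∀ l, x (σ l) = z l * x l := by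
  rw [mem_fixSpace, funext_iff]
  refine ⟨fun h l => ?_, fun h k => ?_⟩
  · simpa [monomialUnit, monomialMatrix_mulVec] using (h (σ l)).symm
  · simpa [monomialUnit, monomialMatrix_mulVec] using (h (σ.symm k)).symm

lemma isGdd_monomialUnit {σ : Equiv.Perm (Fin n)} {z : Fin n → ℂˣ}
    (hz : ∀ l, z l ^ d = 1) (hprod : ∏ l, z l = 1) : IsGdd d n (monomialUnit σ z) :=
  ⟨σ, fun l => z l, fun l => by rw [← Units.val_pow_eq_pow_val, hz, Units.val_one],
    by rw [← Units.coe_prod, hprod, Units.val_one], fun _ _ => rfl⟩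

def reflScalars (a b : Fin n) (u : ℂˣ) : Fin n → ℂˣ :=
  fun l => if l = a then u else if l = b then u⁻¹ else 1

@[simp]
lemma reflScalars_one (a b : Fin n) : reflScalars a b 1 = 1 := by
  ext l
  simp [reflScalars]

lemma prod_reflScalars {a b : Fin n} (hab : a ≠ b) (u : ℂˣ) : ∏ l, reflScalars a b u l = 1 := by
  rw [Fintype.prod_eq_mul a b hab fun l hl => by simp [reflScalars, hl.1, hl.2]]
  simp [reflScalars, hab.symm]

lemma reflScalars_pow {a b : Fin n} {u : ℂˣ} (hu : u ^ d = 1) (l : Fin n) :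
    reflScalars a b u l ^ d = 1 := by
  unfold reflScalars
  split_ifs <;> simp [hu, inv_pow]

/-- For `a < b` and `u = ζ_d ^ s` this is `reflMat d n (a + 1) (b + 1) s`. -/
def swapRefl (a b : Fin n) (u : ℂˣ) : GLn n :=
  monomialUnit (Equiv.swap a b) (reflScalars a b u)

lemma swapRefl_mul_self {a b : Fin n} (hab : a ≠ b) (u : ℂˣ) :
    swapRefl a b u * swapRefl a b u = 1 := by
  rw [swapRefl, monomialUnit_mul, Equiv.swap_mul_self, ← monomialUnit_one]
  congr 1
  ext l
  by_cases ha : l = a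
  · simp [reflScalars, ha, hab.symm]
  by_cases hb : l = b
  · simp [reflScalars, hb, hab.symm]
  simp [reflScalars, Equiv.swap_apply_of_ne_of_ne ha hb, ha, hb]

lemma fixSpace_swapRefl {a b : Fin n} (hab : a ≠ b) (u : ℂˣ) :
    fixSpace (swapRefl a b u) = LinearMap.ker ((u : ℂ) • LinearMap.proj a - LinearMap.proj b) := by
  ext x
  rw [swapRefl, mem_fixSpace_monomialUnit, LinearMap.mem_ker]
  simp only [LinearMap.sub_apply, LinearMap.smul_apply, LinearMap.proj_apply, smul_eq_mul,
    sub_eq_zero]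
  refine ⟨fun h => by simpa [reflScalars] using (h a).symm, fun h l => ?_⟩
  by_cases ha : l = a
  · simp [reflScalars, ha, h]
  by_cases hb : l = b
  · simp only [reflScalars, hb, Equiv.swap_apply_right, if_neg hab.symm, if_true]
    rw [← h, Units.val_inv_eq_inv_val, inv_mul_cancel_left₀ u.ne_zero]
  simp [reflScalars, Equiv.swap_apply_of_ne_of_ne ha hb, ha, hb]

lemma finrank_fixSpace_swapRefl {a b : Fin n} (hab : a ≠ b) (u : ℂˣ) :
    Module.finrank ℂ (fixSpace (swapRefl a b u)) = n - 1 := by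
  have hne : (u : ℂ) • LinearMap.proj a - LinearMap.proj b ≠ (0 : Module.Dual ℂ (Fin n → ℂ)) := by
    intro h
    simpa [Pi.single_apply, hab] using LinearMap.congr_fun h (Pi.single b 1)
  have := Module.Dual.finrank_ker_add_one_of_ne_zero hne
  rw [Module.finrank_fin_fun] at this
  rw [fixSpace_swapRefl hab]
  omega

lemma isGddRefl_swapRefl {a b : Fin n} (hab : a ≠ b) {u : ℂˣ} (hu : u ^ d = 1) :
    IsGddRefl d n (swapRefl a b u) :=
  ⟨isGdd_monomialUnit (reflScalars_pow hu) (prod_reflScalars hab u),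
    isOfFinOrder_iff_pow_eq_one.mpr ⟨2, two_pos, by rw [sq, swapRefl_mul_self hab]⟩,
    finrank_fixSpace_swapRefl hab u⟩

variable (d n) in
def reflWordLengths (w : GLn n) : Set ℕ :=
  {k | ∃ l : List (GLn n), l.length = k ∧ (∀ t ∈ l, IsGddRefl d n t) ∧ l.prod = w}

lemma ellT_eq_sInf (w : GLn n) : ellT d n w = sInf (reflWordLengths d n w) := rfl

lemma add_mem_reflWordLengths_mul {u v : GLn n} {j k : ℕ} (hu : j ∈ reflWordLengths d n u)
    (hv : k ∈ reflWordLengths d n v) : j + k ∈ reflWordLengths d n (u * v) := by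
  obtain ⟨l, rfl, hl, rfl⟩ := hu
  obtain ⟨l', rfl, hl', rfl⟩ := hv
  refine ⟨l ++ l', List.length_append, fun t ht => ?_, List.prod_append⟩
  rcases List.mem_append.mp ht with ht | ht
  exacts [hl t ht, hl' t ht]

lemma zero_mem_reflWordLengths_one : 0 ∈ reflWordLengths d n 1 :=
  ⟨[], rfl, by simp, rfl⟩

lemma one_mem_reflWordLengths {t : GLn n} (ht : IsGddRefl d n t) : 1 ∈ reflWordLengths d n t :=
  ⟨[t], rfl, by simpa using ht, by simp⟩

lemma le_finrank_fixSpace_add_of_mem_reflWordLengths {w : GLn n} {k : ℕ}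
    (hk : k ∈ reflWordLengths d n w) : n ≤ Module.finrank ℂ (fixSpace w) + k := by
  obtain ⟨l, rfl, hl, rfl⟩ := hk
  induction l with
  | nil =>
    rw [List.prod_nil, fixSpace_one, finrank_top, Module.finrank_fin_fun, List.length_nil, add_zero]
  | cons t l ih =>
    have ht := (hl t List.mem_cons_self).2.2
    have hsub := finrank_fixSpace_add_finrank_fixSpace_le t l.prod
    have := ih fun t' ht' => hl t' (List.mem_cons_of_mem _ ht')
    rw [List.prod_cons, List.length_cons]
    omega

variable (d n) in
def reflSubgroup : Subgroup (GLn n) :=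
  Subgroup.closure {t | IsGddRefl d n t}

lemma mem_reflSubgroup_iff {w : GLn n} :
    w ∈ reflSubgroup d n ↔ (reflWordLengths d n w).Nonempty := by
  rw [reflSubgroup, ← Subgroup.mem_toSubmonoid,
    Subgroup.closure_toSubmonoid_of_isOfFinOrder fun t ht => ht.2.1]
  constructor
  · intro h
    obtain ⟨l, hl, rfl⟩ := Submonoid.exists_list_of_mem_closure h
    exact ⟨l.length, l, rfl, hl, rfl⟩
  · rintro ⟨_, l, -, hl, rfl⟩
    exact Submonoid.list_prod_mem _ fun t ht => Submonoid.subset_closure (hl t ht)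

lemma le_finrank_fixSpace_add_ellT {w : GLn n} (hw : w ∈ reflSubgroup d n) :
    n ≤ Module.finrank ℂ (fixSpace w) + ellT d n w :=
  le_finrank_fixSpace_add_of_mem_reflWordLengths (Nat.sInf_mem (mem_reflSubgroup_iff.mp hw))

lemma ellT_eq_zero_of_notMem_reflSubgroup {w : GLn n} (hw : w ∉ reflSubgroup d n) :
    ellT d n w = 0 := by
  rw [mem_reflSubgroup_iff, Set.not_nonempty_iff_eq_empty] at hw
  rw [ellT_eq_sInf, hw, Nat.sInf_empty]

theorem ellT_eq_sub_finrank_fixSpace_of_absLe {c w : GLn n} (hfix : fixSpace c = ⊥)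
    (hc : n ∈ reflWordLengths d n c) (hw : absLe d n w c) :
    ellT d n w = n - Module.finrank ℂ (fixSpace w) := by
  have hcH : c ∈ reflSubgroup d n := mem_reflSubgroup_iff.mpr ⟨n, hc⟩
  have hcle : ellT d n c ≤ n := Nat.sInf_le hc
  have hsum := finrank_fixSpace_add_finrank_fixSpace_le w (w⁻¹ * c)
  rw [mul_inv_cancel_left, hfix, finrank_bot] at hsum
  unfold absLe at hw
  by_cases hwH : w ∈ reflSubgroup d n
  · have h1 := le_finrank_fixSpace_add_ellT hwH
    have h2 := le_finrank_fixSpace_add_ellT (mul_mem (inv_mem hwH) hcH)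
    omega
  · -- `ellT` is the junk value `sInf ∅ = 0` at `w` and `w⁻¹ * c`, hence at `c`, forcing `n = 0`.
    have hvH : w⁻¹ * c ∉ reflSubgroup d n := fun h => hwH (by simpa using mul_mem hcH (inv_mem h))
    have hc0 := le_finrank_fixSpace_add_ellT hcH
    rw [hw, ellT_eq_zero_of_notMem_reflSubgroup hwH, ellT_eq_zero_of_notMem_reflSubgroup hvH,
      hfix, finrank_bot] at hc0
    rw [ellT_eq_zero_of_notMem_reflSubgroup hwH]
    omega

lemma zetaC_pow_self (d : ℕ) : zetaC d ^ d = 1 := by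
  rcases eq_or_ne d 0 with rfl | hd
  · exact pow_zero _
  · exact (Complex.isPrimitiveRoot_exp d hd).pow_eq_one

variable (d) in
noncomputable def zetaUnit : ℂˣ := Units.mk0 (zetaC d) (Complex.exp_ne_zero _)

@[simp]
lemma val_zetaUnit : (zetaUnit d : ℂ) = zetaC d := rfl

lemma zetaUnit_pow_self : zetaUnit d ^ d = 1 :=
  Units.ext (by simpa using zetaC_pow_self d)

lemma coe_cycleRange (i j : Fin n) :
    (Fin.cycleRange i j : ℕ) = if j < i then (j : ℕ) + 1 else if j = i then 0 else j := by
  rcases lt_or_ge i j with h | h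
  · simp [Fin.cycleRange_of_gt h, h.not_gt, h.ne']
  · rw [Fin.coe_cycleRange_of_le h]
    rcases h.lt_or_eq with h' | rfl
    · simp [h', h'.ne]
    · simp

lemma cycleRange_succ {k : ℕ} (hk : k + 1 < n) :
    Fin.cycleRange (⟨k + 1, hk⟩ : Fin n) =
      Fin.cycleRange ⟨k, by omega⟩ * Equiv.swap ⟨k, by omega⟩ ⟨k + 1, hk⟩ := by
  ext l
  simp only [Equiv.Perm.mul_apply, Equiv.swap_apply_def, coe_cycleRange, Fin.ext_iff, Fin.lt_def]
  split_ifs <;> simp_all <;> omega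

lemma mem_reflWordLengths_cycleRange :
    ∀ (k : ℕ) (hk : k < n), k ∈ reflWordLengths d n (monomialUnit (Fin.cycleRange ⟨k, hk⟩) 1)
  | 0, hk => by
    have : Fin.cycleRange (⟨0, hk⟩ : Fin n) = 1 := by
      ext l
      simp
    rw [this, monomialUnit_one]
    exact zero_mem_reflWordLengths_one
  | k + 1, hk => by
    have hfactor : monomialUnit (Fin.cycleRange ⟨k + 1, hk⟩) 1 =
        monomialUnit (Fin.cycleRange ⟨k, by omega⟩) 1 * swapRefl ⟨k, by omega⟩ ⟨k + 1, hk⟩ 1 := by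
      rw [cycleRange_succ, swapRefl, reflScalars_one, monomialUnit_mul]
      congr 1
      funext l
      simp
    rw [hfactor]
    exact add_mem_reflWordLengths_mul (mem_reflWordLengths_cycleRange k _)
      (one_mem_reflWordLengths (isGddRefl_swapRefl (by simp [Fin.ext_iff]) (one_pow d)))

lemma monomialUnit_reflScalars (σ : Equiv.Perm (Fin n)) (a b : Fin n) (u : ℂˣ) :
    monomialUnit σ (reflScalars a b u) =
      monomialUnit σ 1 * (swapRefl a b 1 * swapRefl a b u) := by
  simp [swapRefl, monomialUnit_mul]

lemma gammaMat_eq_monomialMatrix (hn : 2 ≤ n) :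
    gammaMat d n = monomialMatrix (Fin.cycleRange ⟨n - 2, by omega⟩)
      fun l => reflScalars ⟨n - 2, by omega⟩ ⟨n - 1, by omega⟩ (zetaUnit d) l := by
  ext k l
  simp only [gammaMat, monomialMatrix, reflScalars, of_apply, coe_cycleRange, Fin.ext_iff,
    Fin.lt_def]
  split_ifs <;> first | omega | simp_all

lemma eq_monomialUnit_of_val_eq_gammaMat (hn : 2 ≤ n) {γ : GLn n}
    (hγ : (γ : Matrix (Fin n) (Fin n) ℂ) = gammaMat d n) :
    γ = monomialUnit (Fin.cycleRange ⟨n - 2, by omega⟩)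
      (reflScalars ⟨n - 2, by omega⟩ ⟨n - 1, by omega⟩ (zetaUnit d)) :=
  Units.ext (hγ.trans (gammaMat_eq_monomialMatrix hn))

/-- `γ = ((1⁰ 2⁰)) ⋯ (((n-2)⁰ (n-1)⁰)) · (((n-1)⁰ n⁰)) · (((n-1)⁰ n¹))`. -/
lemma mem_reflWordLengths_of_val_eq_gammaMat (hn : 2 ≤ n) {γ : GLn n}
    (hγ : (γ : Matrix (Fin n) (Fin n) ℂ) = gammaMat d n) : n ∈ reflWordLengths d n γ := by
  have hab : (⟨n - 2, by omega⟩ : Fin n) ≠ ⟨n - 1, by omega⟩ :=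
    Fin.ne_of_val_ne (show n - 2 ≠ n - 1 by omega)
  rw [eq_monomialUnit_of_val_eq_gammaMat hn hγ, monomialUnit_reflScalars]
  convert add_mem_reflWordLengths_mul (mem_reflWordLengths_cycleRange _ _) <|
    add_mem_reflWordLengths_mul (one_mem_reflWordLengths (isGddRefl_swapRefl hab (one_pow d)))
      (one_mem_reflWordLengths (isGddRefl_swapRefl hab zetaUnit_pow_self)) using 1
  omega

lemma fixSpace_monomialUnit_cycleRange_eq_bot (hn : 2 ≤ n) {u : ℂˣ} (hu : u ≠ 1) :
    fixSpace (monomialUnit (Fin.cycleRange (⟨n - 2, by omega⟩ : Fin n))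
      (reflScalars ⟨n - 2, by omega⟩ ⟨n - 1, by omega⟩ u)) = ⊥ := by
  refine eq_bot_iff.mpr fun x hx => ?_
  rw [mem_fixSpace_monomialUnit] at hx
  have hstep (m : ℕ) (hm : m + 2 < n) : x ⟨m + 1, by omega⟩ = x ⟨m, by omega⟩ := by
    have hσ : Fin.cycleRange (⟨n - 2, by omega⟩ : Fin n) ⟨m, by omega⟩ = ⟨m + 1, by omega⟩ :=
      Fin.ext (Fin.coe_cycleRange_of_lt (Fin.mk_lt_mk.mpr (by omega)))
    simpa [hσ, reflScalars, Fin.ext_iff, show m ≠ n - 2 by omega, show m ≠ n - 1 by omega]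
      using hx ⟨m, by omega⟩
  have hconst (m : ℕ) (hm : m ≤ n - 2) : x ⟨m, by omega⟩ = x ⟨0, by omega⟩ := by
    induction m with
    | zero => rfl
    | succ m ih => rw [hstep m (by omega), ih (by omega)]
  have hwrap : x ⟨0, by omega⟩ = u * x ⟨0, by omega⟩ := by
    have hσ : Fin.cycleRange (⟨n - 2, by omega⟩ : Fin n) ⟨n - 2, by omega⟩ = ⟨0, by omega⟩ :=
      Fin.ext (by simp [coe_cycleRange])
    simpa [hσ, reflScalars, hconst (n - 2) le_rfl] using hx ⟨n - 2, by omega⟩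
  have hlast : x ⟨n - 1, by omega⟩ = (u : ℂ)⁻¹ * x ⟨n - 1, by omega⟩ := by
    have hσ : Fin.cycleRange (⟨n - 2, by omega⟩ : Fin n) ⟨n - 1, by omega⟩ = ⟨n - 1, by omega⟩ :=
      Fin.cycleRange_of_gt (Fin.mk_lt_mk.mpr (by omega))
    simpa [hσ, reflScalars, Fin.ext_iff, show n - 1 ≠ n - 2 by omega] using hx ⟨n - 1, by omega⟩
  have hu' : (u : ℂ) ≠ 1 := by simpa using hu
  have hx0 : x ⟨0, by omega⟩ = 0 := by
    have : (1 - (u : ℂ)) * x ⟨0, by omega⟩ = 0 := by linear_combination hwrap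
    exact (mul_eq_zero.mp this).resolve_left (sub_ne_zero.mpr hu'.symm)
  have hxlast : x ⟨n - 1, by omega⟩ = 0 := by
    have : (1 - (u : ℂ)⁻¹) * x ⟨n - 1, by omega⟩ = 0 := by linear_combination hlast
    exact (mul_eq_zero.mp this).resolve_left (sub_ne_zero.mpr (inv_ne_one.mpr hu').symm)
  rw [Submodule.mem_bot]
  funext ⟨k, hk⟩
  rcases (by omega : k = n - 1 ∨ k ≤ n - 2) with rfl | hk'
  · exact hxlast
  · exact (hconst k hk').trans hx0

lemma fixSpace_eq_bot_of_val_eq_gammaMat (hd : 2 ≤ d) (hn : 2 ≤ n) {γ : GLn n}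
    (hγ : (γ : Matrix (Fin n) (Fin n) ℂ) = gammaMat d n) : fixSpace γ = ⊥ := by
  have hζ : zetaUnit d ≠ 1 := fun h =>
    (Complex.isPrimitiveRoot_exp d (by omega)).ne_one (by omega) (congrArg Units.val h)
  rw [eq_monomialUnit_of_val_eq_gammaMat hn hγ]
  exact fixSpace_monomialUnit_cycleRange_eq_bot hn hζ

end

/-- For `w ≤_T γ` in `G(d,d,n)`, one has
`ℓ_T(w) = n − dim Fix(w)`. -/
theorem length_eq_codim_fix
    (d n : ℕ) (hd : 3 ≤ d) (hn : 2 ≤ n)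
    (γ w : GLn n) (hγ : (γ : Matrix (Fin n) (Fin n) ℂ) = gammaMat d n)
    (hw : absLe d n w γ) :
    ellT d n w = n - Module.finrank ℂ (fixSpace w) :=
  ellT_eq_sub_finrank_fixSpace_of_absLe (fixSpace_eq_bot_of_val_eq_gammaMat (by omega) hn hγ)
    (mem_reflWordLengths_of_val_eq_gammaMat hn hγ) hw
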